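/- arXiv:0904.2237 — 6 statements merged into one kernel-verified Lean document; each statement's English description precedes it below -/
import Mathlib

section
/- Let q = 2^n and let k be a positive integer with d = gcd(n,k). The number of triples (x,y,z) in F_q^3 satisfying x + y + z = 0, x^{2^k+1} + y^{2^k+1} + z^{2^k+1} = 0, and x^{2^{2k}+1} + y^{2^{2k}+1} + z^{2^{2k}+1} = 0 equals 2^{n+d} + 2^n - 2^d. -/
/-!
In characteristic 2, `x + y + z = 0` forces `z = x + y`, and then
`x^{2^m+1} + y^{2^m+1} + z^{2^m+1} = x^{2^m} y + x y^{2^m}`. This vanishes iff `x = 0` or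
`u = y / x` satisfies `u^{2^m} = u`, so the condition for `m = 2k` follows from the one for `m = k`.
The nonzero solutions of `u^{2^k} = u` form the kernel of `a ↦ a^{2^k - 1}` on the cyclic group
`F_qˣ`, which has `gcd(2^n - 1, 2^k - 1) = 2^d - 1` elements. Hence there are `q + (q - 1) 2^d`
solutions.
-/

section Field

variable {F : Type*} [Field F]

theorem pow_mul_eq_mul_pow_iff_div_pow {x : F} (hx : x ≠ 0) (r : ℕ) (y : F) :
    x ^ r * y = x * y ^ r ↔ (y / x) ^ r = y / x := by
  rw [div_pow, div_eq_div_iff (pow_ne_zero _ hx) hx]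
  constructor <;> intro h <;> linear_combination -h

theorem pow_sq_mul_eq_mul_pow_sq {r : ℕ} {x y : F} (h : x ^ r * y = x * y ^ r) :
    x ^ r ^ 2 * y = x * y ^ r ^ 2 := by
  rcases eq_or_ne x 0 with rfl | hx
  · rcases eq_or_ne r 0 with rfl | hr
    · simpa using h
    · simp [hr]
  rw [pow_mul_eq_mul_pow_iff_div_pow hx] at h ⊢
  rw [sq, pow_mul, h, h]

theorem card_pow_mul_eq_mul_pow_eq_card_pow_eq_self {x : F} (hx : x ≠ 0) (r : ℕ) :
    Nat.card {y : F // x ^ r * y = x * y ^ r} = Nat.card {u : F // u ^ r = u} :=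
  Nat.card_congr <| ((Equiv.mulLeft₀ x hx).subtypeEquiv fun u => by
    show u ^ r = u ↔ x ^ r * (x * u) = x * (x * u) ^ r
    rw [pow_mul_eq_mul_pow_iff_div_pow hx, mul_div_cancel_left₀ u hx]).symm

theorem setOf_pow_eq_self_eq_insert_zero {r : ℕ} (hr : r ≠ 0) :
    {u : F | u ^ r = u}
      = insert 0 (((↑) : Fˣ → F) '' (powMonoidHom (r - 1) : Fˣ →* Fˣ).ker) := by
  ext u
  rcases eq_or_ne u 0 with rfl | hu
  · simp [hr]
  lift u to Fˣ using IsUnit.mk0 u hu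
  have hr' : r = r - 1 + 1 := (Nat.succ_pred_eq_of_ne_zero hr).symm
  simp only [Set.mem_ofPred_eq, Set.mem_insert_iff, hu, false_or, Set.mem_image,
    SetLike.mem_coe, MonoidHom.mem_ker, powMonoidHom_apply, Units.val_inj, exists_eq_right]
  conv_lhs => rw [hr', pow_succ, ← Units.val_pow_eq_pow_val, ← Units.val_mul, Units.val_inj]
  exact mul_eq_right

theorem card_pow_eq_self [Finite F] {r : ℕ} (hr : r ≠ 0) :
    Nat.card {u : F // u ^ r = u} = (Nat.card F - 1).gcd (r - 1) + 1 := by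
  rw [← Set.coe_ofPred, Nat.card_coe_set_eq, setOf_pow_eq_self_eq_insert_zero hr,
    Set.ncard_insert_of_notMem (by simp), Set.ncard_image_of_injective _ Units.val_injective,
    ← Nat.card_coe_set_eq, SetLike.coe_sort_coe, IsCyclic.card_powMonoidHom_ker, Nat.card_units]

theorem ncard_pow_mul_eq_mul_pow [Finite F] {r : ℕ} (hr : r ≠ 0) :
    {p : F × F | p.1 ^ r * p.2 = p.1 * p.2 ^ r}.ncard
      = Nat.card F + (Nat.card F - 1) * ((Nat.card F - 1).gcd (r - 1) + 1) := by
  classical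
  have := Fintype.ofFinite F
  rw [← Nat.card_coe_set_eq, Set.coe_ofPred,
    Nat.card_congr (Equiv.subtypeProdEquivSigmaSubtype fun x y : F => x ^ r * y = x * y ^ r),
    Nat.card_sigma, ← Finset.add_sum_erase _ _ (Finset.mem_univ 0),
    Finset.sum_congr rfl fun x hx => (card_pow_mul_eq_mul_pow_eq_card_pow_eq_self
      (Finset.ne_of_mem_erase hx) r).trans (card_pow_eq_self hr)]
  simp [hr, Finset.card_erase_of_mem, Nat.card_eq_fintype_card]

end Field

section CharTwo

variable {F : Type*} [Field F] [CharP F 2]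

theorem pow_two_pow_add_one_add_add_pow_two_pow_add_one (m : ℕ) (x y : F) :
    x ^ (2 ^ m + 1) + y ^ (2 ^ m + 1) + (x + y) ^ (2 ^ m + 1) = x ^ 2 ^ m * y + x * y ^ 2 ^ m := by
  rw [pow_succ, pow_succ, pow_succ, add_pow_char_pow]
  linear_combination (x ^ 2 ^ m * x + y ^ 2 ^ m * y) * CharTwo.two_eq_zero (R := F)

theorem setOf_triple_eq_image (k : ℕ) :
    {t : F × F × F |
        t.1 + t.2.1 + t.2.2 = 0 ∧
        t.1 ^ (2 ^ k + 1) + t.2.1 ^ (2 ^ k + 1) + t.2.2 ^ (2 ^ k + 1) = 0 ∧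
        t.1 ^ (2 ^ (2 * k) + 1) + t.2.1 ^ (2 ^ (2 * k) + 1) + t.2.2 ^ (2 ^ (2 * k) + 1) = 0}
      = (fun p : F × F => (p.1, p.2, p.1 + p.2)) ''
          {p : F × F | p.1 ^ 2 ^ k * p.2 = p.1 * p.2 ^ 2 ^ k} := by
  ext ⟨x, y, z⟩
  simp only [Set.mem_ofPred_eq, Set.mem_image, Prod.mk.injEq, Prod.exists]
  constructor
  · rintro ⟨hz, hk, -⟩
    obtain rfl : z = x + y := (CharTwo.add_eq_zero.mp hz).symm
    rw [pow_two_pow_add_one_add_add_pow_two_pow_add_one, CharTwo.add_eq_zero] at hk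
    exact ⟨x, y, hk, rfl, rfl, rfl⟩
  · rintro ⟨x, y, hk, rfl, rfl, rfl⟩
    have h2k := pow_sq_mul_eq_mul_pow_sq hk
    rw [← pow_mul'] at h2k
    simp only [pow_two_pow_add_one_add_add_pow_two_pow_add_one, CharTwo.add_self_eq_zero,
      hk, h2k, and_self]

end CharTwo

theorem stmt_0_general (n k : ℕ) (hn : 0 < n) (d : ℕ) (hd : d = Nat.gcd n k) :
    {t : GaloisField 2 n × GaloisField 2 n × GaloisField 2 n |
        t.1 + t.2.1 + t.2.2 = 0 ∧
        t.1 ^ (2 ^ k + 1) + t.2.1 ^ (2 ^ k + 1) + t.2.2 ^ (2 ^ k + 1) = 0 ∧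
        t.1 ^ (2 ^ (2 * k) + 1) + t.2.1 ^ (2 ^ (2 * k) + 1) + t.2.2 ^ (2 ^ (2 * k) + 1) = 0}.ncard
      = 2 ^ (n + d) + 2 ^ n - 2 ^ d := by
  have hinj :
      Function.Injective fun p : GaloisField 2 n × GaloisField 2 n => (p.1, p.2, p.1 + p.2) :=
    fun p p' h => Prod.ext (congrArg Prod.fst h :) (congrArg (·.2.1) h :)
  rw [setOf_triple_eq_image, Set.ncard_image_of_injective _ hinj,
    ncard_pow_mul_eq_mul_pow (by positivity), GaloisField.card 2 n hn.ne',
    Nat.pow_sub_one_gcd_pow_sub_one, ← hd, Nat.sub_add_cancel Nat.one_le_two_pow,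
    Nat.sub_mul, one_mul, ← pow_add]
  have : 2 ^ d ≤ 2 ^ (n + d) := Nat.pow_le_pow_right two_pos (Nat.le_add_left d n)
  rw [add_comm (2 ^ (n + d)), Nat.add_sub_assoc this]

/-- the number of triples (x,y,z) ∈ F_q³ with x+y+z = 0,
x^{2^k+1}+y^{2^k+1}+z^{2^k+1} = 0 and x^{2^{2k}+1}+y^{2^{2k}+1}+z^{2^{2k}+1} = 0
equals 2^{n+d} + 2^n - 2^d, where q = 2^n and d = gcd(n,k). -/
theorem stmt_0 (n k : ℕ) (hn : 0 < n) (hk : 0 < k) (d : ℕ) (hd : d = Nat.gcd n k) :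
    {t : GaloisField 2 n × GaloisField 2 n × GaloisField 2 n |
        t.1 + t.2.1 + t.2.2 = 0 ∧
        t.1 ^ (2 ^ k + 1) + t.2.1 ^ (2 ^ k + 1) + t.2.2 ^ (2 ^ k + 1) = 0 ∧
        t.1 ^ (2 ^ (2 * k) + 1) + t.2.1 ^ (2 ^ (2 * k) + 1) + t.2.2 ^ (2 ^ (2 * k) + 1) = 0}.ncard
      = 2 ^ (n + d) + 2 ^ n - 2 ^ d :=
  stmt_0_general n k hn d hd
end

section
/- Let q = 2^n, k a positive integer, d = gcd(n,k), and for α, β, γ ∈ F_q define S(α,β,γ) = Σ_{x ∈ F_q} (-1)^{Tr(α x^{2^{2k}+1} + β x^{2^k+1} + γ x)}, where Tr is the absolute trace from F_q to F_2. Then Σ_{α,β,γ ∈ F_q} S(α,β,γ)^3 = (2^{n+d} + 2^n - 2^d) · 2^{3n}. -/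
/-!
Expanding the cube and summing over `α, β, γ` first, orthogonality of the additive character
`t ↦ (-1) ^ Tr t` turns the moment into `q³` times the number of `(x, y, z)` with
`x + y + z = 0`, `∑ x^(2^k+1) = 0` and `∑ x^(2^(2k)+1) = 0`. In characteristic two, `z = x + y`
and `x^(2^k+1) + y^(2^k+1) + z^(2^k+1) = x^(2^k) y + x y^(2^k)`, so the solutions are the pairs
with `x^(2^k) y = x y^(2^k)`, i.e. `x = 0` or `y = t x` with `t^(2^k) = t`; the latter condition
implies the one for `2^(2k)`. Besides `0`, the fixed points of `t ↦ t^(2^k)` are the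
`(2^k - 1)`-th roots of unity in the cyclic group `F_q^×`, and there are
`gcd(2^n - 1, 2^k - 1) = 2^d - 1` of them; hence `q + (q - 1) 2^d` solutions.
-/

open Finset

theorem AddChar.map_sum_eq_prod {A M ι : Type*} [AddCommMonoid A] [CommMonoid M]
    (ψ : AddChar A M) (s : Finset ι) (f : ι → A) : ψ (∑ i ∈ s, f i) = ∏ i ∈ s, ψ (f i) := by
  classical
  induction s using Finset.induction_on with
  | empty => simp
  | insert j s hj ih => rw [sum_insert hj, prod_insert hj, map_add_eq_mul, ih]

theorem AddChar.sum_sum_sum_sum_pow {R R' ι : Type*} [CommRing R] [Fintype R] [DecidableEq R]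
    [CommRing R'] [IsDomain R'] [Fintype ι] {ψ : AddChar R R'} (hψ : ψ.IsPrimitive)
    (a b c : ι → R) (m : ℕ) :
    ∑ α, ∑ β, ∑ γ, (∑ x, ψ (α * a x + β * b x + γ * c x)) ^ m
      = (Fintype.card R : R') ^ 3 *
        #{p : Fin m → ι | ∑ i, a (p i) = 0 ∧ ∑ i, b (p i) = 0 ∧ ∑ i, c (p i) = 0} := by
  have hprod : ∀ α β γ (p : Fin m → ι), ∏ i, ψ (α * a (p i) + β * b (p i) + γ * c (p i))
      = ψ (α * ∑ i, a (p i)) * ψ (β * ∑ i, b (p i)) * ψ (γ * ∑ i, c (p i)) := by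
    intro α β γ p
    simp only [mul_sum, map_sum_eq_prod, map_add_eq_mul, prod_mul_distrib]
  calc _ = ∑ p : Fin m → ι, (∑ α, ψ (α * ∑ i, a (p i))) * (∑ β, ψ (β * ∑ i, b (p i))) *
        ∑ γ, ψ (γ * ∑ i, c (p i)) := by
        simp only [Fintype.sum_pow, hprod, sum_comm (t := (univ : Finset (Fin m → ι)))]
        refine sum_congr rfl fun p _ => ?_
        -- keeps the sum rewriting below away from the inner sums
        generalize ∑ i, a (p i) = A, ∑ i, b (p i) = B, ∑ i, c (p i) = C
        rw [sum_mul_sum, sum_mul]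
        simp_rw [sum_mul_sum]
    _ = _ := by
        simp only [sum_mulShift _ hψ]
        rw [natCast_card_filter, mul_sum]
        refine sum_congr rfl fun p _ => ?_
        split_ifs <;> simp_all [pow_three, mul_assoc]

noncomputable def traceChar (F : Type*) [Field F] [Algebra (ZMod 2) F] : AddChar F ℤ :=
  (AddChar.zmodChar 2 (by norm_num : (-1 : ℤ) ^ 2 = 1)).compAddMonoidHom
    (Algebra.trace (ZMod 2) F).toAddMonoidHom

theorem traceChar_apply {F : Type*} [Field F] [Algebra (ZMod 2) F] (t : F) :
    traceChar F t = (-1) ^ (Algebra.trace (ZMod 2) F t).val := rfl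

theorem isPrimitive_traceChar (F : Type*) [Field F] [Finite F] [Algebra (ZMod 2) F] :
    (traceChar F).IsPrimitive := by
  refine AddChar.IsPrimitive.of_ne_one fun h => ?_
  obtain ⟨a, ha⟩ := Algebra.trace_surjective (ZMod 2) F 1
  have := DFunLike.congr_fun h a
  rw [traceChar_apply, ha, AddChar.one_apply] at this
  exact absurd this (by decide)

theorem add_pow_expChar_pow_add_one {R : Type*} [CommRing R] {p : ℕ} [ExpChar R p]
    (x y : R) (m : ℕ) :
    (x + y) ^ (p ^ m + 1) = x ^ (p ^ m + 1) + y ^ (p ^ m + 1) + x ^ p ^ m * y + x * y ^ p ^ m := by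
  rw [pow_succ, add_pow_expChar_pow]
  ring

theorem CharTwo.pow_add_pow_add_add_pow {R : Type*} [CommRing R] [CharP R 2] (x y : R) (m : ℕ) :
    x ^ (2 ^ m + 1) + y ^ (2 ^ m + 1) + (x + y) ^ (2 ^ m + 1) = x ^ 2 ^ m * y + x * y ^ 2 ^ m := by
  rw [add_pow_expChar_pow_add_one (p := 2)]
  linear_combination (x ^ (2 ^ m + 1) + y ^ (2 ^ m + 1)) * CharTwo.two_eq_zero (R := R)

section Field

variable {F : Type*} [Field F]

theorem pow_mul_eq_mul_pow_iff {x : F} (hx : x ≠ 0) (y : F) (e : ℕ) :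
    x ^ e * y = x * y ^ e ↔ (y / x) ^ e = y / x := by
  rw [div_pow, div_eq_div_iff (pow_ne_zero e hx) hx]
  constructor <;> intro h <;> linear_combination -h

theorem pow_mul_self_mul_eq_mul_pow_mul_self {x y : F} {e : ℕ} (he : e ≠ 0)
    (h : x ^ e * y = x * y ^ e) : x ^ (e * e) * y = x * y ^ (e * e) := by
  rcases eq_or_ne x 0 with rfl | hx
  · simp [he]
  rw [pow_mul_eq_mul_pow_iff hx] at h ⊢
  rw [pow_mul, h, h]

theorem CharTwo.frobenius_system_iff [CharP F 2] (k : ℕ) (x y z : F) :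
    (x ^ (2 ^ (2 * k) + 1) + y ^ (2 ^ (2 * k) + 1) + z ^ (2 ^ (2 * k) + 1) = 0 ∧
      x ^ (2 ^ k + 1) + y ^ (2 ^ k + 1) + z ^ (2 ^ k + 1) = 0 ∧ x + y + z = 0)
      ↔ z = x + y ∧ x ^ 2 ^ k * y = x * y ^ 2 ^ k := by
  constructor
  · rintro ⟨-, h, hz⟩
    obtain rfl : z = x + y := (CharTwo.add_eq_zero.1 hz).symm
    rw [CharTwo.pow_add_pow_add_add_pow, CharTwo.add_eq_zero] at h
    exact ⟨rfl, h⟩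
  · rintro ⟨rfl, h⟩
    simp only [CharTwo.pow_add_pow_add_add_pow, CharTwo.add_eq_zero,
      CharTwo.add_self_eq_zero, and_true, h]
    rw [two_mul, pow_add]
    exact pow_mul_self_mul_eq_mul_pow_mul_self (pow_ne_zero k two_ne_zero) h

variable [Fintype F] [DecidableEq F]

theorem card_filter_pow_eq_self {e : ℕ} (he : e ≠ 0) :
    #{t : F | t ^ e = t} = (Fintype.card F - 1).gcd (e - 1) + 1 := by
  have hunits : #{u : Fˣ | u ^ (e - 1) = 1} = (Fintype.card F - 1).gcd (e - 1) := by
    rw [← Fintype.card_units, ← Nat.card_eq_fintype_card,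
      ← IsCyclic.card_powMonoidHom_ker, ← Fintype.card_subtype, ← Nat.card_eq_fintype_card]
    rfl
  have hset : ({t : F | t ^ e = t} : Finset F)
      = insert 0 (({u : Fˣ | u ^ (e - 1) = 1} : Finset Fˣ).map ⟨Units.val, Units.val_injective⟩) := by
    ext t
    simp only [mem_filter, mem_univ, true_and, mem_insert, mem_map, Function.Embedding.coeFn_mk]
    rcases eq_or_ne t 0 with rfl | ht
    · simp [zero_pow he]
    · lift t to Fˣ using ht.isUnit
      rw [← pow_sub_one_mul he, mul_eq_right₀ t.ne_zero, ← Units.val_pow_eq_pow_val,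
        Units.val_eq_one]
      simp [Units.val_injective.eq_iff]
  rw [hset, card_insert_of_notMem (by simp), card_map, hunits]

theorem card_filter_pow_pow_eq_self {p n : ℕ} (hF : Fintype.card F = p ^ n) (k : ℕ) :
    #{t : F | t ^ p ^ k = t} = p ^ n.gcd k := by
  have hp : p ≠ 0 := by
    rintro rfl
    have := Fintype.one_lt_card (α := F)
    rcases n with _ | n <;> simp_all
  rw [card_filter_pow_eq_self (pow_ne_zero k hp), hF, Nat.pow_sub_one_gcd_pow_sub_one,
    Nat.sub_add_cancel (Nat.one_le_pow _ _ (Nat.pos_of_ne_zero hp))]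

theorem card_filter_pow_mul_eq_mul_pow {x : F} (hx : x ≠ 0) (e : ℕ) :
    #{y : F | x ^ e * y = x * y ^ e} = #{t : F | t ^ e = t} := by
  refine card_nbij' (· / x) (· * x) ?_ ?_ ?_ ?_ <;> intro y <;>
    simp [pow_mul_eq_mul_pow_iff hx, hx]

theorem card_filter_prod_pow_mul_eq_mul_pow {e : ℕ} (he : e ≠ 0) :
    #{z : F × F | z.1 ^ e * z.2 = z.1 * z.2 ^ e}
      = Fintype.card F + (Fintype.card F - 1) * #{t : F | t ^ e = t} := by
  rw [card_filter, Fintype.sum_prod_type, ← add_sum_erase _ _ (mem_univ 0)]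
  simp only [← card_filter]
  rw [sum_congr rfl fun x hx => card_filter_pow_mul_eq_mul_pow (ne_of_mem_erase hx) e]
  simp [zero_pow he, card_erase_of_mem]

theorem CharTwo.card_frobenius_system [CharP F 2] (k : ℕ) :
    #{v : Fin 3 → F | ∑ i, v i ^ (2 ^ (2 * k) + 1) = 0 ∧ ∑ i, v i ^ (2 ^ k + 1) = 0 ∧
      ∑ i, v i = 0} = Fintype.card F + (Fintype.card F - 1) * #{t : F | t ^ 2 ^ k = t} := by
  rw [← card_filter_prod_pow_mul_eq_mul_pow (by positivity)]
  refine card_nbij' (fun v => (v 0, v 1)) (fun z => ![z.1, z.2, z.1 + z.2]) ?_ ?_ ?_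
    (fun _ _ => rfl) <;> intro v hv <;>
    simp only [coe_filter_univ, Set.mem_ofPred_eq, Fin.sum_univ_three, frobenius_system_iff] at hv ⊢
  · exact hv.2
  · simpa using hv
  · ext i
    fin_cases i <;> simp [hv.1.symm]

end Field

theorem stmt_1_general (n k : ℕ) (hn : 0 < n) (d : ℕ) (hd : d = Nat.gcd n k)
    [Fintype (GaloisField 2 n)]
    (S : GaloisField 2 n → GaloisField 2 n → GaloisField 2 n → ℤ)
    (hS : ∀ α β γ : GaloisField 2 n, S α β γ = ∑ x : GaloisField 2 n,
      (-1 : ℤ) ^ (Algebra.trace (ZMod 2) (GaloisField 2 n)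
        (α * x ^ (2 ^ (2 * k) + 1) + β * x ^ (2 ^ k + 1) + γ * x)).val) :
    ∑ α : GaloisField 2 n, ∑ β : GaloisField 2 n, ∑ γ : GaloisField 2 n, (S α β γ) ^ 3
      = (2 ^ (n + d) + 2 ^ n - 2 ^ d) * 2 ^ (3 * n) := by
  classical
  have hq : Fintype.card (GaloisField 2 n) = 2 ^ n := by
    rw [← Nat.card_eq_fintype_card, GaloisField.card 2 n hn.ne']
  have hmoment := AddChar.sum_sum_sum_sum_pow (isPrimitive_traceChar (GaloisField 2 n))
    (fun x => x ^ (2 ^ (2 * k) + 1)) (fun x => x ^ (2 ^ k + 1)) id 3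
  simp only [id, ← traceChar_apply] at hS hmoment
  simp only [hS, hmoment]
  rw [CharTwo.card_frobenius_system, card_filter_pow_pow_eq_self hq, hq, hd]
  push_cast [Nat.one_le_two_pow]
  ring

/-- the third power moment identity
∑_{α,β,γ ∈ F_q} S(α,β,γ)³ = (2^{n+d} + 2^n - 2^d)·2^{3n}. -/
theorem stmt_1 (n k : ℕ) (hn : 0 < n) (hk : 0 < k) (d : ℕ) (hd : d = Nat.gcd n k)
    [Fintype (GaloisField 2 n)]
    (S : GaloisField 2 n → GaloisField 2 n → GaloisField 2 n → ℤ)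
    (hS : ∀ α β γ : GaloisField 2 n, S α β γ = ∑ x : GaloisField 2 n,
      (-1 : ℤ) ^ (Algebra.trace (ZMod 2) (GaloisField 2 n)
        (α * x ^ (2 ^ (2 * k) + 1) + β * x ^ (2 ^ k + 1) + γ * x)).val) :
    ∑ α : GaloisField 2 n, ∑ β : GaloisField 2 n, ∑ γ : GaloisField 2 n, (S α β γ) ^ 3
      = (2 ^ (n + d) + 2 ^ n - 2 ^ d) * 2 ^ (3 * n) :=
  stmt_1_general n k hn d hd S hS
end

section
/- Let q = 2^n, k a positive integer, d = gcd(n,k). The set of x ∈ F_q with x^{2^{2k}+1} + (x+1)^{2^{2k}+1} + 1 = 0 and x^{2^k+1} + (x+1)^{2^k+1} + 1 = 0 is exactly the subfield F_{2^d} ⊆ F_q; in particular the number of x ∈ F_q \ {0,1} satisfying both equations is 2^d - 2. -/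
/-!
In characteristic 2, `x ^ (2 ^ m + 1) + (x + 1) ^ (2 ^ m + 1) + 1 = x ^ 2 ^ m + x`, so the two
equations say that `x` is a periodic point of the Frobenius `x ↦ x ^ 2` of periods `2k` and `k`.
Every element of `𝔽_{2^n}` also has period `n`, hence the solutions are the points of period
`gcd n k = d`, i.e. the roots of `X ^ 2 ^ d - X`. Since `d ∣ n`, this polynomial divides
`X ^ 2 ^ n - X = ∏ (X - a)`, so it has exactly `2 ^ d` distinct roots in `𝔽_{2^n}`.
-/

open Polynomial Function

lemma pow_two_pow_add_one_add_add_one_pow_add_one {R : Type*} [CommRing R] [CharP R 2]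
    (x : R) (m : ℕ) : x ^ (2 ^ m + 1) + (x + 1) ^ (2 ^ m + 1) + 1 = x ^ 2 ^ m + x := by
  rw [pow_succ x, pow_succ (x + 1), add_pow_char_pow, one_pow]
  linear_combination (x ^ 2 ^ m * x + 1) * CharTwo.two_eq_zero (R := R)

lemma isPeriodicPt_pow_iff {M : Type*} [Monoid M] {p m : ℕ} {x : M} :
    IsPeriodicPt (· ^ p) m x ↔ x ^ p ^ m = x := by
  rw [IsPeriodicPt, IsFixedPt, pow_iterate]

lemma ncard_setOf_pow_pow_eq_self {K : Type*} [Field K] [Fintype K] {q n d : ℕ}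
    (hK : Fintype.card K = q ^ n) (hdn : d ∣ n) :
    {x : K | x ^ q ^ d = x}.ncard = q ^ d := by
  classical
  have hqd : 1 < q ^ d := by
    by_contra! h
    obtain ⟨m, rfl⟩ := hdn
    have : Fintype.card K ≤ 1 := hK ▸ pow_mul q d m ▸ pow_le_one' h m
    exact this.not_gt Fintype.one_lt_card
  set f : K[X] := X ^ q ^ d - X
  set g : K[X] := X ^ Fintype.card K - X
  have hg0 : g ≠ 0 := FiniteField.X_pow_card_sub_X_ne_zero K Fintype.one_lt_card
  have hfg : f ∣ g := by
    simpa only [f, g, hK] using dvd_pow_pow_sub_self_of_dvd hdn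
  have hf_splits : Splits f :=
    (Nat.card_eq_fintype_card (α := K) ▸ splits_X_pow_nat_card_sub_X).of_dvd hg0 hfg
  have hf_nodup : f.roots.Nodup :=
    Multiset.nodup_of_le (roots.le_of_dvd hg0 hfg)
      (FiniteField.roots_X_pow_card_sub_X K ▸ Finset.univ.nodup)
  have hf0 : f ≠ 0 := FiniteField.X_pow_card_sub_X_ne_zero K hqd
  have hset : {x : K | x ^ q ^ d = x} = ↑f.roots.toFinset := by
    ext x
    simp [f, mem_roots hf0, sub_eq_zero]
  rw [hset, Set.ncard_coe_finset, Multiset.toFinset_card_of_nodup hf_nodup,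
    ← hf_splits.natDegree_eq_card_roots, FiniteField.X_pow_card_sub_X_natDegree_eq K hqd]

theorem stmt_2_general (n k : ℕ) (hn : 0 < n) (d : ℕ) (hd : d = Nat.gcd n k) :
    ({x : GaloisField 2 n |
        x ^ (2 ^ (2 * k) + 1) + (x + 1) ^ (2 ^ (2 * k) + 1) + 1 = 0 ∧
        x ^ (2 ^ k + 1) + (x + 1) ^ (2 ^ k + 1) + 1 = 0}
      = {x : GaloisField 2 n | x ^ (2 ^ d) = x}) ∧
    {x : GaloisField 2 n |
        (x ^ (2 ^ (2 * k) + 1) + (x + 1) ^ (2 ^ (2 * k) + 1) + 1 = 0 ∧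
         x ^ (2 ^ k + 1) + (x + 1) ^ (2 ^ k + 1) + 1 = 0) ∧ x ≠ 0 ∧ x ≠ 1}.ncard
      = 2 ^ d - 2 := by
  let _ : Fintype (GaloisField 2 n) := Fintype.ofFinite _
  have hcard : Fintype.card (GaloisField 2 n) = 2 ^ n :=
    Nat.card_eq_fintype_card (α := GaloisField 2 n) ▸ GaloisField.card 2 n hn.ne'
  have hiff : ∀ x : GaloisField 2 n,
      (x ^ (2 ^ (2 * k) + 1) + (x + 1) ^ (2 ^ (2 * k) + 1) + 1 = 0 ∧
       x ^ (2 ^ k + 1) + (x + 1) ^ (2 ^ k + 1) + 1 = 0) ↔ x ^ 2 ^ d = x := by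
    intro x
    simp only [pow_two_pow_add_one_add_add_one_pow_add_one, CharTwo.add_eq_zero,
      ← isPeriodicPt_pow_iff, hd]
    have hn_period : IsPeriodicPt (· ^ 2) n x :=
      isPeriodicPt_pow_iff.mpr (hcard ▸ FiniteField.pow_card x)
    exact ⟨fun ⟨_, hk⟩ ↦ hn_period.gcd hk, fun h ↦
      ⟨h.trans_dvd ((Nat.gcd_dvd_right n k).mul_left 2), h.trans_dvd (Nat.gcd_dvd_right n k)⟩⟩
  have hset : {x : GaloisField 2 n |
      (x ^ (2 ^ (2 * k) + 1) + (x + 1) ^ (2 ^ (2 * k) + 1) + 1 = 0 ∧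
       x ^ (2 ^ k + 1) + (x + 1) ^ (2 ^ k + 1) + 1 = 0) ∧ x ≠ 0 ∧ x ≠ 1} =
      {x : GaloisField 2 n | x ^ 2 ^ d = x} \ {0, 1} := by
    ext x
    simp [hiff]
  refine ⟨Set.ext hiff, ?_⟩
  rw [hset, Set.ncard_sdiff (by simp [Set.insert_subset_iff]), Set.ncard_pair zero_ne_one,
    ncard_setOf_pow_pow_eq_self hcard (hd ▸ Nat.gcd_dvd_left n k)]

/-- the set of x ∈ F_q with x^{2^{2k}+1}+(x+1)^{2^{2k}+1}+1 = 0 and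
x^{2^k+1}+(x+1)^{2^k+1}+1 = 0 is exactly the subfield F_{2^d} (the fixed points of
x ↦ x^{2^d}); in particular the number of such x outside {0,1} is 2^d - 2. -/
theorem stmt_2 (n k : ℕ) (hn : 0 < n) (hk : 0 < k) (d : ℕ) (hd : d = Nat.gcd n k) :
    ({x : GaloisField 2 n |
        x ^ (2 ^ (2 * k) + 1) + (x + 1) ^ (2 ^ (2 * k) + 1) + 1 = 0 ∧
        x ^ (2 ^ k + 1) + (x + 1) ^ (2 ^ k + 1) + 1 = 0}
      = {x : GaloisField 2 n | x ^ (2 ^ d) = x}) ∧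
    {x : GaloisField 2 n |
        (x ^ (2 ^ (2 * k) + 1) + (x + 1) ^ (2 ^ (2 * k) + 1) + 1 = 0 ∧
         x ^ (2 ^ k + 1) + (x + 1) ^ (2 ^ k + 1) + 1 = 0) ∧ x ≠ 0 ∧ x ≠ 1}.ncard
      = 2 ^ d - 2 :=
  stmt_2_general n k hn d hd
end

section
/- Let q = 2^n, k a positive integer with d = gcd(n,k), and α, β ∈ F_q with (α,β) ≠ (0,0). Define the linearized polynomial φ_{α,β}(x) = α^{2^{2k}} x^{2^{4k}} + β^{2^{2k}} x^{2^{3k}} + β^{2^k} x^{2^k} + α x. Then the set of roots of φ_{α,β} in F_q is an F_{2^d}-vector subspace of F_q of dimension at most 4. -/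
/-!
Let `σ = x ↦ x ^ 2 ^ k`, whose fixed field in `F_q` is `F_{2^d}`. Then `φ_{α,β}` is the
`F_{2^d}`-linear map `x ↦ ∑ aᵢ σⁱ(x)` with `(a₀, …, a₄) = (α, β^{2^k}, 0, β^{2^{2k}}, α^{2^{2k}})`,
so its roots form an `F_{2^d}`-subspace. If the top coefficient `a_r` of such a `σ`-linearized
map is nonzero, its kernel has dimension at most `r` over the fixed field of `σ`: after scaling
one root to `1`, summation by parts writes the map as a `σ`-linearized map of degree `r - 1`
composed with `x ↦ σ x - x`, whose kernel is the fixed field, and one inducts on `r`.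
-/

open Finset Module

section Linearized

variable {E : Type*} [Field E] (σ : E →+* E)

def RingHom.fixedField : Subfield E := σ.eqLocusField (RingHom.id E)

variable {σ} in
theorem RingHom.mem_fixedField {x : E} : x ∈ σ.fixedField ↔ σ x = x := Iff.rfl

def RingHom.toFixedFieldLinearMap : E →ₗ[σ.fixedField] E where
  toFun := σ
  map_add' := map_add σ
  map_smul' c x := by
    simp only [Subfield.smul_def, smul_eq_mul, map_mul, RingHom.id_apply,
      RingHom.mem_fixedField.1 c.2]

def RingHom.linearizedMap (a : ℕ → E) (r : ℕ) : E →ₗ[σ.fixedField] E :=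
  ∑ i ∈ Finset.range (r + 1), a i • σ.toFixedFieldLinearMap ^ i

theorem RingHom.linearizedMap_apply (a : ℕ → E) (r : ℕ) (x : E) :
    σ.linearizedMap a r x = ∑ i ∈ Finset.range (r + 1), a i * σ^[i] x := by
  simp [RingHom.linearizedMap, LinearMap.sum_apply, Module.End.pow_apply,
    RingHom.toFixedFieldLinearMap]

theorem RingHom.linearizedMap_mul_apply (a : ℕ → E) (r : ℕ) (y x : E) :
    σ.linearizedMap a r (y * x) = σ.linearizedMap (fun i ↦ a i * σ^[i] y) r x := by
  simp only [RingHom.linearizedMap_apply, ← RingHom.coe_pow, map_mul, mul_assoc]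

theorem RingHom.linearizedMap_one (a : ℕ → E) (r : ℕ) :
    σ.linearizedMap a r 1 = ∑ i ∈ Finset.range (r + 1), a i := by
  simp [RingHom.linearizedMap_apply]

theorem RingHom.linearizedMap_succ_of_sum_eq_zero {a : ℕ → E} {r : ℕ}
    (ha : ∑ i ∈ Finset.range (r + 2), a i = 0) (x : E) :
    σ.linearizedMap a (r + 1) x =
      σ.linearizedMap (fun j ↦ -∑ i ∈ Finset.range (j + 1), a i) r (σ x - x) := by
  have hparts := sum_range_by_parts (fun i ↦ σ^[i] x) a (r + 2)
  rw [ha, smul_zero, zero_sub, show r + 2 - 1 = r + 1 from rfl] at hparts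
  rw [σ.linearizedMap_apply, σ.linearizedMap_apply]
  simp_rw [mul_comm (a _), ← smul_eq_mul]
  rw [hparts, ← sum_neg_distrib]
  refine sum_congr rfl fun j _ ↦ ?_
  simp only [Function.iterate_succ_apply, ← RingHom.coe_pow, map_sub, smul_eq_mul]
  ring

theorem RingHom.ker_toFixedFieldLinearMap_sub_id :
    LinearMap.ker (σ.toFixedFieldLinearMap - LinearMap.id) = σ.fixedField ∙ (1 : E) := by
  ext x
  simp only [LinearMap.mem_ker, LinearMap.sub_apply, LinearMap.id_apply, sub_eq_zero,
    Submodule.mem_span_singleton, Subfield.smul_def, smul_eq_mul, mul_one]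
  exact ⟨fun hx ↦ ⟨⟨x, hx⟩, rfl⟩, by rintro ⟨c, rfl⟩; exact c.2⟩

variable {σ}

theorem RingHom.linearIndependent_sub_self_of_finSnoc_one {m : ℕ} {u : Fin m → E}
    (hu : LinearIndependent σ.fixedField (Fin.snoc u 1 : Fin (m + 1) → E)) :
    LinearIndependent σ.fixedField fun t ↦ σ (u t) - u t := by
  obtain ⟨hu, h1⟩ := linearIndependent_finSnoc.1 hu
  have hdisj : Disjoint (Submodule.span σ.fixedField (Set.range u))
      (LinearMap.ker (σ.toFixedFieldLinearMap - LinearMap.id)) := by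
    rw [σ.ker_toFixedFieldLinearMap_sub_id]
    exact (Submodule.disjoint_span_singleton' one_ne_zero).2 h1
  exact (hu.map hdisj :)

theorem RingHom.not_linearIndependent_of_linearizedMap_eq_zero {a : ℕ → E} {r : ℕ}
    (ha : a r ≠ 0) (v : Fin (r + 1) → E) (hv : ∀ j, σ.linearizedMap a r (v j) = 0) :
    ¬ LinearIndependent σ.fixedField v := by
  induction r generalizing a with
  | zero =>
    intro hli
    refine hli.ne_zero 0 ?_
    simpa [σ.linearizedMap_apply, ha] using hv 0
  | succ r ih =>
    intro hli
    set y := v (Fin.last _)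
    have hy : y ≠ 0 := hli.ne_zero _
    set u : Fin (r + 2) → E := fun t ↦ y⁻¹ * v t
    have hu : LinearIndependent σ.fixedField u :=
      hli.map' (LinearMap.mulLeft σ.fixedField y⁻¹)
        (LinearMap.ker_eq_bot.2 (mul_right_injective₀ (inv_ne_zero hy)))
    have hu_last : u (Fin.last _) = 1 := inv_mul_cancel₀ hy
    set b : ℕ → E := fun i ↦ a i * σ^[i] y
    have hbu : ∀ t, σ.linearizedMap b (r + 1) (u t) = 0 := fun t ↦ by
      rw [← σ.linearizedMap_mul_apply, mul_inv_cancel_left₀ hy]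
      exact hv t
    have hb : ∑ i ∈ Finset.range (r + 2), b i = 0 := by
      rw [← σ.linearizedMap_one, ← hu_last]
      exact hbu _
    have hb_top : b (r + 1) ≠ 0 := by
      refine mul_ne_zero ha ?_
      rw [← RingHom.coe_pow]
      exact (map_ne_zero _).2 hy
    refine ih (a := fun j ↦ -∑ i ∈ Finset.range (j + 1), b i) ?_
      (fun t ↦ σ (u t.castSucc) - u t.castSucc) (fun t ↦ ?_) ?_
    · rw [Finset.sum_range_succ] at hb
      rwa [neg_eq_of_add_eq_zero_right hb]
    · rw [← σ.linearizedMap_succ_of_sum_eq_zero hb]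
      exact hbu _
    · refine RingHom.linearIndependent_sub_self_of_finSnoc_one (u := Fin.init u) ?_
      rwa [← hu_last, Fin.snoc_init_self]

theorem RingHom.rank_ker_linearizedMap_le_of_ne_zero {a : ℕ → E} {r : ℕ} (ha : a r ≠ 0) :
    Module.rank σ.fixedField (LinearMap.ker (σ.linearizedMap a r)) ≤ r := by
  refine rank_le fun s hs ↦ ?_
  by_contra! hr
  let f : Fin (r + 1) → s := s.equivFin.symm ∘ Fin.castLE hr
  have hf : Function.Injective f := s.equivFin.symm.injective.comp (Fin.castLE_injective hr)
  refine RingHom.not_linearIndependent_of_linearizedMap_eq_zero ha (fun j ↦ ((f j : _) : E))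
    (fun j ↦ ((f j : LinearMap.ker (σ.linearizedMap a r))).2) ?_
  exact ((hs.comp f hf).map' _ (Submodule.ker_subtype _) :)

theorem RingHom.rank_ker_linearizedMap_le {a : ℕ → E} {r : ℕ} (ha : ∃ i ≤ r, a i ≠ 0) :
    Module.rank σ.fixedField (LinearMap.ker (σ.linearizedMap a r)) ≤ r := by
  induction r with
  | zero =>
    obtain ⟨i, hi, hai⟩ := ha
    exact rank_ker_linearizedMap_le_of_ne_zero (by rwa [← Nat.le_zero.1 hi])
  | succ r ih =>
    by_cases htop : a (r + 1) = 0
    · obtain ⟨i, hi, hai⟩ := ha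
      have hir : i ≤ r := Nat.le_of_lt_succ (lt_of_le_of_ne hi (by rintro rfl; exact hai htop))
      have hmap : σ.linearizedMap a (r + 1) = σ.linearizedMap a r := by
        simp [RingHom.linearizedMap, Finset.sum_range_succ _ (r + 1), htop]
      rw [hmap]
      exact (ih ⟨i, hir, hai⟩).trans (by norm_cast; omega)
    · exact rank_ker_linearizedMap_le_of_ne_zero htop

end Linearized

theorem iterate_iterateFrobenius {R : Type*} [CommSemiring R] (p : ℕ) [ExpChar R p]
    (k i : ℕ) (x : R) : (iterateFrobenius R p k)^[i] x = x ^ p ^ (k * i) := by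
  rw [coe_iterateFrobenius, ← Function.iterate_mul, iterate_frobenius]

section FiniteField

open Polynomial

variable {p : ℕ} [Fact p.Prime] {F : Type*} [Field F] [Finite F] [Algebra (ZMod p) F]

theorem ncard_setOf_pow_pow_eq_self_s4 {d : ℕ} (hd : d ≠ 0) (hdF : d ∣ finrank (ZMod p) F) :
    {x : F | x ^ p ^ d = x}.ncard = p ^ d := by
  have hp : 1 < p := (Fact.out : p.Prime).one_lt
  have hroots : {x : F | x ^ p ^ d = x} = (X ^ p ^ d - X : (ZMod p)[X]).rootSet F := by
    ext x
    simp [mem_rootSet_of_ne (FiniteField.X_pow_card_pow_sub_X_ne_zero _ hd hp), sub_eq_zero]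
  obtain ⟨f⟩ := FiniteField.nonempty_algHom_of_finrank_dvd (K := GaloisField p d) (L := F)
    (by rwa [GaloisField.finrank p hd])
  refine le_antisymm ?_ ?_
  · rw [hroots]
    exact (ncard_rootSet_le _ _).trans_eq
      (FiniteField.X_pow_card_pow_sub_X_natDegree_eq _ hd hp)
  · let := Fintype.ofFinite (GaloisField p d)
    have hcard : Fintype.card (GaloisField p d) = p ^ d := by
      rw [Fintype.card_eq_nat_card, GaloisField.card p d hd]
    calc p ^ d = (Set.range f).ncard := by
          rw [Set.ncard_range_of_injective (f := f) f.toRingHom.injective, GaloisField.card p d hd]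
      _ ≤ _ := Set.ncard_le_ncard (by
          rintro _ ⟨y, rfl⟩
          rw [Set.mem_ofPred_eq, ← map_pow, ← hcard, FiniteField.pow_card])

variable [ExpChar F p]

theorem mem_fixedField_iterateFrobenius (k : ℕ) (x : F) :
    x ∈ (iterateFrobenius F p k).fixedField ↔ x ^ p ^ (finrank (ZMod p) F).gcd k = x := by
  let := Fintype.ofFinite F
  have hperiodic (m : ℕ) : Function.IsPeriodicPt (· ^ p) m x ↔ x ^ p ^ m = x := by
    simp [Function.IsPeriodicPt, Function.IsFixedPt, pow_iterate]
  have hcard : Fintype.card F = p ^ finrank (ZMod p) F := by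
    rw [Fintype.card_eq_nat_card, FiniteField.pow_finrank_eq_natCard]
  rw [RingHom.mem_fixedField, iterateFrobenius_def, ← hperiodic, ← hperiodic]
  refine ⟨((hperiodic _).2 (hcard ▸ FiniteField.pow_card x)).gcd, fun h ↦ ?_⟩
  exact h.trans_dvd (Nat.gcd_dvd_right _ k)

theorem natCard_fixedField_iterateFrobenius (k : ℕ) :
    Nat.card (iterateFrobenius F p k).fixedField = p ^ (finrank (ZMod p) F).gcd k := by
  rw [← SetLike.coe_sort_coe, Nat.card_coe_set_eq,
    show ((iterateFrobenius F p k).fixedField : Set F) = {x | x ^ p ^ _ = x} from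
      Set.ext (mem_fixedField_iterateFrobenius k)]
  exact ncard_setOf_pow_pow_eq_self_s4 (Nat.gcd_pos_of_pos_left k finrank_pos).ne'
    (Nat.gcd_dvd_left _ k)

end FiniteField

theorem stmt_4_general (n k : ℕ) (hn : 0 < n) (d : ℕ) (hd : d = Nat.gcd n k)
    (α β : GaloisField 2 n) (hαβ : (α, β) ≠ (0, 0))
    (V : Set (GaloisField 2 n))
    (hV : V = {x : GaloisField 2 n |
      α ^ (2 ^ (2 * k)) * x ^ (2 ^ (4 * k)) + β ^ (2 ^ (2 * k)) * x ^ (2 ^ (3 * k))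
        + β ^ (2 ^ k) * x ^ (2 ^ k) + α * x = 0}) :
    (0 : GaloisField 2 n) ∈ V ∧
    (∀ x ∈ V, ∀ y ∈ V, x + y ∈ V) ∧
    (∀ c : GaloisField 2 n, c ^ (2 ^ d) = c → ∀ x ∈ V, c * x ∈ V) ∧
    (∃ m : ℕ, m ≤ 4 ∧ V.ncard = (2 ^ d) ^ m) := by
  let σ := iterateFrobenius (GaloisField 2 n) 2 k
  have hfinrank : finrank (ZMod 2) (GaloisField 2 n) = n := GaloisField.finrank 2 hn.ne'
  let a : ℕ → GaloisField 2 n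
    | 0 => α
    | 1 => β ^ 2 ^ k
    | 3 => β ^ 2 ^ (2 * k)
    | 4 => α ^ 2 ^ (2 * k)
    | _ => 0
  let W := LinearMap.ker (σ.linearizedMap a 4)
  have hVW : V = W := by
    ext x
    rw [hV, SetLike.mem_coe, LinearMap.mem_ker, σ.linearizedMap_apply]
    simp only [Set.mem_ofPred_eq, σ, iterate_iterateFrobenius, sum_range_succ, range_one,
      sum_singleton, zero_mul, add_zero, a]
    ring_nf
  have hrank : finrank σ.fixedField W ≤ 4 := by
    refine finrank_le_of_rank_le (σ.rank_ker_linearizedMap_le ?_)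
    by_contra! h
    exact hαβ (by simpa [a] using And.intro (h 0 (by norm_num)) (h 1 (by norm_num)))
  subst hVW
  refine ⟨W.zero_mem, fun x hx y hy ↦ W.add_mem hx hy, fun c hc x hx ↦ W.smul_mem
    ⟨c, (mem_fixedField_iterateFrobenius k c).2 (by rwa [hfinrank, ← hd])⟩ hx, _, hrank, ?_⟩
  rw [← Nat.card_coe_set_eq, SetLike.coe_sort_coe, natCard_eq_pow_finrank (K := σ.fixedField),
    natCard_fixedField_iterateFrobenius, hfinrank, hd]

/-- for (α,β) ≠ (0,0), the set of roots in F_q of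
φ_{α,β}(x) = α^{2^{2k}} x^{2^{4k}} + β^{2^{2k}} x^{2^{3k}} + β^{2^k} x^{2^k} + α x
is an F_{2^d}-vector subspace of F_q of dimension at most 4 (so it contains 0, is closed
under addition and under multiplication by elements of the subfield F_{2^d}, and its
cardinality is (2^d)^m for some m ≤ 4). -/
theorem stmt_4 (n k : ℕ) (hn : 0 < n) (hk : 0 < k) (d : ℕ) (hd : d = Nat.gcd n k)
    (α β : GaloisField 2 n) (hαβ : (α, β) ≠ (0, 0))
    (V : Set (GaloisField 2 n))
    (hV : V = {x : GaloisField 2 n |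
      α ^ (2 ^ (2 * k)) * x ^ (2 ^ (4 * k)) + β ^ (2 ^ (2 * k)) * x ^ (2 ^ (3 * k))
        + β ^ (2 ^ k) * x ^ (2 ^ k) + α * x = 0}) :
    (0 : GaloisField 2 n) ∈ V ∧
    (∀ x ∈ V, ∀ y ∈ V, x + y ∈ V) ∧
    (∀ c : GaloisField 2 n, c ^ (2 ^ d) = c → ∀ x ∈ V, c * x ∈ V) ∧
    (∃ m : ℕ, m ≤ 4 ∧ V.ncard = (2 ^ d) ^ m) :=
  stmt_4_general n k hn d hd α β hαβ V hV
end

section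
/- Let q_0 = 2^d, s be a positive integer, H an s × s matrix over F_{q_0}, and F(X) = X H X^T the associated quadratic form on F_{q_0}^s. Let r be the rank of H + H^T. Then Σ_{X ∈ F_{q_0}^s} (-1)^{Tr_{F_{q_0}/F_2}(F(X))} ∈ {0, q_0^{s − r/2}, −q_0^{s − r/2}}. -/
/-!
Write `χ = (-1)^Tr`, `Q x = x ⬝ᵥ H *ᵥ x`, `A = H + Hᵀ` and `S = ∑ₓ χ (Q x)`. Substituting
`y = x + z` in `S²` and using `Q (x + z) = Q x + Q z + x ⬝ᵥ A *ᵥ z` with `Q x + Q x = 0` gives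
`S² = ∑_z χ (Q z) ∑ₓ χ (x ⬝ᵥ A *ᵥ z) = q^s ∑_{z ∈ ker A} χ (Q z)`. On `ker A` the form `Q` is
additive, so the last sum is `0` or `|ker A| = q^(s - r)`. In characteristic 2 the matrix `A` is
alternating, so `r` is even (a maximal isotropic subspace is its own orthogonal) and
`S² ∈ {0, (q^(s - r/2))²}`.
-/

open Matrix Module

namespace LinearMap.BilinForm

variable {K V : Type*} [Field K] [AddCommGroup V] [Module K V] {B : LinearMap.BilinForm K V}

lemma IsAlt.sup_span_le_orthogonal (hB : B.IsAlt) {L : Submodule K V}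
    (hL : L ≤ B.orthogonal L) {x : V} (hx : x ∈ B.orthogonal L) :
    L ⊔ K ∙ x ≤ B.orthogonal (L ⊔ K ∙ x) := by
  rintro _ ha _ hb
  obtain ⟨l, hl, _, hx₁, rfl⟩ := Submodule.mem_sup.mp ha
  obtain ⟨l', hl', _, hx₂, rfl⟩ := Submodule.mem_sup.mp hb
  obtain ⟨c, rfl⟩ := Submodule.mem_span_singleton.mp hx₁
  obtain ⟨c', rfl⟩ := Submodule.mem_span_singleton.mp hx₂
  simp [hL hl l' hl', hx l' hl', hB.isRefl _ _ (hx l hl), hB.self_eq_zero x]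

/-- A maximal isotropic subspace is its own orthogonal. -/
lemma IsAlt.exists_orthogonal_eq_self [FiniteDimensional K V] (hB : B.IsAlt) :
    ∃ L : Submodule K V, B.orthogonal L = L := by
  obtain ⟨L, hL, hmax⟩ :=
    exists_maximal_of_wellFoundedGT (fun L : Submodule K V ↦ L ≤ B.orthogonal L) ⟨⊥, bot_le⟩
  refine ⟨L, le_antisymm (fun x hx ↦ ?_) hL⟩
  have hle := hmax (hB.sup_span_le_orthogonal hL hx) le_sup_left
  exact hle (Submodule.mem_sup_right (Submodule.mem_span_singleton_self x))

lemma IsAlt.even_finrank_range [FiniteDimensional K V] (hB : B.IsAlt) :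
    Even (finrank K (range B)) := by
  obtain ⟨L, hL⟩ := hB.exists_orthogonal_eq_self
  have hker : ker B ≤ L := by
    rw [← hL]
    exact fun y hy l _ ↦ hB.isRefl _ _ (by rw [hy]; rfl)
  have hdim := finrank_add_finrank_orthogonal' (B := B) L
  rw [hL, inf_eq_right.mpr hker] at hdim
  have := finrank_range_add_finrank_ker B
  exact ⟨finrank K L - finrank K (ker B), by omega⟩

end LinearMap.BilinForm

lemma Matrix.ker_toBilin' {K n : Type*} [CommSemiring K] [Fintype n] [DecidableEq n]
    (A : Matrix n n K) :
    LinearMap.ker (toBilin' A) = LinearMap.ker Aᵀ.mulVecLin := by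
  ext x
  simp only [LinearMap.mem_ker, mulVecLin_apply, mulVec_transpose, ← dotProduct_eq_zero_iff,
    ← dotProduct_mulVec, ← toBilin'_apply']
  exact LinearMap.ext_iff

lemma Matrix.even_rank_of_isAlt {K n : Type*} [Field K] [Fintype n] [DecidableEq n]
    {A : Matrix n n K} (hA : (toBilin' A).IsAlt) : Even A.rank := by
  have h₁ := LinearMap.finrank_range_add_finrank_ker (toBilin' A)
  have h₂ := LinearMap.finrank_range_add_finrank_ker Aᵀ.mulVecLin
  rw [ker_toBilin'] at h₁
  rw [← rank_transpose, Matrix.rank, show finrank K (LinearMap.range Aᵀ.mulVecLin) =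
    finrank K (LinearMap.range (toBilin' A)) by omega]
  exact LinearMap.BilinForm.IsAlt.even_finrank_range hA

lemma Matrix.add_dotProduct_mulVec_add {R n : Type*} [CommSemiring R] [Fintype n]
    (H : Matrix n n R) (x z : n → R) :
    (x + z) ⬝ᵥ H *ᵥ (x + z) = x ⬝ᵥ H *ᵥ x + z ⬝ᵥ H *ᵥ z + x ⬝ᵥ (H + Hᵀ) *ᵥ z := by
  simp only [mulVec_add, add_mulVec, dotProduct_add, add_dotProduct, dotProduct_transpose_mulVec]
  abel

lemma Matrix.isAlt_toBilin'_add_transpose {R n : Type*} [CommSemiring R] [CharP R 2] [Fintype n]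
    [DecidableEq n] (H : Matrix n n R) : (toBilin' (H + Hᵀ)).IsAlt := by
  intro x
  rw [toBilin'_apply', add_mulVec, dotProduct_add, dotProduct_transpose_mulVec,
    CharTwo.add_self_eq_zero]

lemma Matrix.card_ker_mulVecLin {F m n : Type*} [Field F] [Fintype F] [Fintype n]
    (A : Matrix m n F) [Fintype (LinearMap.ker A.mulVecLin)] :
    Fintype.card (LinearMap.ker A.mulVecLin) = Fintype.card F ^ (Fintype.card n - A.rank) := by
  have := LinearMap.finrank_range_add_finrank_ker A.mulVecLin
  rw [finrank_fintype_fun_eq_card] at this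
  rw [card_eq_pow_finrank (K := F), Matrix.rank]
  congr 1
  omega

/-- On the kernel of the polar matrix `H + Hᵀ` the quadratic form `x ⬝ᵥ H *ᵥ x` is additive. -/
def AddChar.quadraticOnKer {F R n : Type*} [CommRing F] [Monoid R] [Fintype n]
    (ψ : AddChar F R) (H : Matrix n n F) :
    AddChar (LinearMap.ker (H + Hᵀ).mulVecLin) R where
  toFun z := ψ (z ⬝ᵥ H *ᵥ z)
  map_zero_eq_one' := by simp
  map_add_eq_mul' a b := by
    have hb : (H + Hᵀ) *ᵥ b = 0 := LinearMap.mem_ker.mp b.2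
    rw [Submodule.coe_add, add_dotProduct_mulVec_add, hb, dotProduct_zero, add_zero,
      map_add_eq_mul]

namespace AddChar

variable {F R n : Type*} [Field F] [Fintype F] [CommRing R] [IsDomain R] [Fintype n]
  [DecidableEq n] {ψ : AddChar F R}

lemma sum_dotProduct_eq_zero (hψ : ψ ≠ 1) {v : n → F} (hv : v ≠ 0) :
    ∑ x : n → F, ψ (x ⬝ᵥ v) = 0 := by
  obtain ⟨c, hc⟩ := ne_one_iff.mp hψ
  obtain ⟨i, hi⟩ := Function.ne_iff.mp hv
  refine sum_eq_zero_of_ne_one (ψ := ψ.compAddMonoidHom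
    (AddMonoidHom.mk' (· ⬝ᵥ v) fun x y ↦ add_dotProduct x y v)) (ne_one_iff.mpr ?_)
  refine ⟨Pi.single i (c / v i), ?_⟩
  simpa [single_dotProduct, div_mul_cancel₀ c hi] using hc

open scoped Classical in
lemma sum_dotProduct_mulVec_self_mul_self [CharP F 2] (hψ : ψ ≠ 1) (H : Matrix n n F) :
    (∑ x, ψ (x ⬝ᵥ H *ᵥ x)) * ∑ x, ψ (x ⬝ᵥ H *ᵥ x) =
      Fintype.card F ^ Fintype.card n * ∑ z, ψ.quadraticOnKer H z := by
  set Q := fun x : n → F ↦ x ⬝ᵥ H *ᵥ x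
  set K := LinearMap.ker (H + Hᵀ).mulVecLin
  have hshift : ∀ x z, ψ (Q x) * ψ (Q (x + z)) = ψ (Q z) * ψ (x ⬝ᵥ (H + Hᵀ) *ᵥ z) := by
    intro x z
    simp only [Q, ← map_add_eq_mul, add_dotProduct_mulVec_add, ← add_assoc,
      CharTwo.add_self_eq_zero, zero_add]
  have hinner : ∀ z, ∑ x, ψ (x ⬝ᵥ (H + Hᵀ) *ᵥ z) =
      if z ∈ K then (Fintype.card F : R) ^ Fintype.card n else 0 := by
    intro z
    split_ifs with hz
    · have hz : (H + Hᵀ) *ᵥ z = 0 := hz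
      simp [hz]
    · exact sum_dotProduct_eq_zero hψ hz
  calc (∑ x, ψ (Q x)) * ∑ y, ψ (Q y)
      = ∑ x, ∑ z, ψ (Q x) * ψ (Q (x + z)) := by
        rw [Finset.sum_mul_sum]
        exact Finset.sum_congr rfl fun x _ ↦ (Equiv.sum_comp (Equiv.addLeft x) _).symm
    _ = ∑ z, ψ (Q z) * ∑ x, ψ (x ⬝ᵥ (H + Hᵀ) *ᵥ z) := by
        simp only [hshift, Finset.mul_sum]
        exact Finset.sum_comm
    _ = ∑ z ∈ Finset.univ.filter (· ∈ K), Fintype.card F ^ Fintype.card n * ψ (Q z) := by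
        rw [Finset.sum_filter]
        simp [hinner, mul_comm]
    _ = _ := by
        rw [Finset.sum_subtype (p := (· ∈ K)) _ (fun _ ↦ by simp), ← Finset.mul_sum]
        rfl

theorem sum_dotProduct_mulVec_self_mem [CharP F 2] (hψ : ψ ≠ 1) (H : Matrix n n F) :
    ∑ x, ψ (x ⬝ᵥ H *ᵥ x) ∈ ({0, (Fintype.card F : R) ^ (Fintype.card n - (H + Hᵀ).rank / 2),
      -(Fintype.card F : R) ^ (Fintype.card n - (H + Hᵀ).rank / 2)} : Set R) := by
  classical
  have hS := sum_dotProduct_mulVec_self_mul_self hψ H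
  set S := ∑ x, ψ (x ⬝ᵥ H *ᵥ x)
  set r := (H + Hᵀ).rank
  obtain ⟨k, hk⟩ : Even r := even_rank_of_isAlt (isAlt_toBilin'_add_transpose H)
  have hr : r ≤ Fintype.card n := by simpa using rank_le_card_width (H + Hᵀ)
  rw [sum_eq_ite] at hS
  split_ifs at hS
  · rw [card_ker_mulVecLin] at hS
    have hS' : S * S = (Fintype.card F : R) ^ (Fintype.card n - r / 2) *
        (Fintype.card F : R) ^ (Fintype.card n - r / 2) := by
      rw [hS, ← pow_add, Nat.cast_pow, ← pow_add]
      congr 1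
      omega
    rcases mul_self_eq_mul_self_iff.mp hS' with h | h <;> simp [h]
  · exact .inl (mul_self_eq_zero.mp (hS.trans (mul_zero _)))

end AddChar

def ZMod.signAddChar : AddChar (ZMod 2) ℤ where
  toFun a := (-1) ^ a.val
  map_zero_eq_one' := rfl
  map_add_eq_mul' := by decide

noncomputable def traceSignChar (F : Type*) [Field F] [Algebra (ZMod 2) F] : AddChar F ℤ :=
  ZMod.signAddChar.compAddMonoidHom (Algebra.trace (ZMod 2) F).toAddMonoidHom

lemma traceSignChar_ne_one (F : Type*) [Field F] [Finite F] [Algebra (ZMod 2) F] :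
    traceSignChar F ≠ 1 := by
  obtain ⟨c, hc⟩ := DFunLike.ne_iff.mp (Algebra.trace_ne_zero (ZMod 2) F)
  refine AddChar.ne_one_iff.mpr ⟨c, ?_⟩
  exact (by decide : ∀ a : ZMod 2, a ≠ 0 → (-1 : ℤ) ^ a.val ≠ 1) _ hc

theorem stmt_9_general (d s : ℕ) (hd : 0 < d) [Fintype (GaloisField 2 d)]
    (H : Matrix (Fin s) (Fin s) (GaloisField 2 d)) (r : ℕ)
    (hr : r = (H + H.transpose).rank) :
    (∑ X : Fin s → GaloisField 2 d,
        (-1 : ℤ) ^ (Algebra.trace (ZMod 2) (GaloisField 2 d)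
          (X ⬝ᵥ H.mulVec X)).val)
      ∈ ({0, ((2 : ℤ) ^ d) ^ (s - r / 2), -((2 : ℤ) ^ d) ^ (s - r / 2)} : Set ℤ) := by
  have hq : Fintype.card (GaloisField 2 d) = 2 ^ d := by
    rw [← Nat.card_eq_fintype_card, GaloisField.card 2 d hd.ne']
  have h := AddChar.sum_dotProduct_mulVec_self_mem (traceSignChar_ne_one (GaloisField 2 d)) H
  rw [hq, Fintype.card_fin, ← hr] at h
  exact_mod_cast h

/-- for a quadratic form F(X) = X H Xᵀ over F_{q₀} (q₀ = 2^d), with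
r = rank(H + Hᵀ), the character sum ∑_X (-1)^{Tr(F(X))} is 0 or ±q₀^{s - r/2}. -/
theorem stmt_9 (d s : ℕ) (hd : 0 < d) (hs : 0 < s) [Fintype (GaloisField 2 d)]
    (H : Matrix (Fin s) (Fin s) (GaloisField 2 d)) (r : ℕ)
    (hr : r = (H + H.transpose).rank) :
    (∑ X : Fin s → GaloisField 2 d,
        (-1 : ℤ) ^ (Algebra.trace (ZMod 2) (GaloisField 2 d)
          (X ⬝ᵥ H.mulVec X)).val)
      ∈ ({0, ((2 : ℤ) ^ d) ^ (s - r / 2), -((2 : ℤ) ^ d) ^ (s - r / 2)} : Set ℤ) :=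
  stmt_9_general d s hd H r hr
end

section
/- Let q = 2^n, k a positive integer with d = gcd(n,k), s = n/d odd, and α, β ∈ F_q not both zero. The number of x ∈ F_q with α^{2^{2k}} x^{2^{4k}} + β^{2^{2k}} x^{2^{3k}} + β^{2^k} x^{2^k} + α x = 0 is either 2^d or 2^{3d}. -/
/-!
Write `σ x = x ^ 2 ^ k`, let `K = 𝔽_{2^d}` be its fixed field, and let
`L x = σ²α σ⁴x + σ²β σ³x + σβ σx + α x`, a `K`-linear map whose kernel is the solution set.
In characteristic 2 the form `B(x, y) = Tr(L x · σ² y)` is alternating: as `Tr ∘ σ = Tr`, the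
four terms of `B(x, x)` cancel in pairs. The trace form is nondegenerate, so the radical of `B`
is `ker L`, and since an alternating form has even rank, `dim_K ker L ≡ [𝔽_q : K] = n / d` is odd.
On the other hand `L` is a `σ`-polynomial of degree 4 with a nonzero coefficient; splitting off one
root at a time (right division by `σ - A`) shows it has at most `|K| ^ 4` zeros. Hence
`dim_K ker L ∈ {1, 3}`.
-/

open Module Finset

namespace LinearMap.BilinForm

variable {K V : Type*} [Field K] [AddCommGroup V] [Module K V] {B : LinearMap.BilinForm K V}

theorem IsAlt.orthogonal_le_of_maximal (hB : B.IsAlt) {U : Submodule K V}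
    (hU : U ≤ B.orthogonal U) (hmax : ∀ W, W ≤ B.orthogonal W → ¬U < W) :
    B.orthogonal U ≤ U := by
  intro v hv
  by_contra hvU
  refine hmax (U ⊔ K ∙ v) ?_ <| SetLike.lt_iff_le_and_exists.2
    ⟨le_sup_left, v, Submodule.mem_sup_right (Submodule.mem_span_singleton_self v), hvU⟩
  rintro _ hy _ hx
  obtain ⟨a, ha, _, hc, rfl⟩ := Submodule.mem_sup.1 hx
  obtain ⟨b, hb, _, hc', rfl⟩ := Submodule.mem_sup.1 hy
  obtain ⟨c, rfl⟩ := Submodule.mem_span_singleton.1 hc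
  obtain ⟨c', rfl⟩ := Submodule.mem_span_singleton.1 hc'
  have hvb : B v b = 0 := hB.isRefl _ _ (hv b hb)
  simp [hU hb a ha, hv a ha, hvb, hB v]

theorem IsAlt.even_finrank_add_finrank_ker [FiniteDimensional K V] (hB : B.IsAlt) :
    Even (finrank K V + finrank K (LinearMap.ker B)) := by
  obtain ⟨U, hU, hmax⟩ := wellFounded_gt.has_min {W : Submodule K V | W ≤ B.orthogonal W}
    ⟨⊥, (bot_le : ⊥ ≤ B.orthogonal ⊥)⟩
  have hUperp : B.orthogonal U = U := le_antisymm (hB.orthogonal_le_of_maximal hU hmax) hU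
  have hker : LinearMap.ker B ≤ U := by
    rw [← hUperp, ← orthogonal_top_eq_ker hB.isRefl]
    exact orthogonal_le le_top
  have hdim := finrank_add_finrank_orthogonal' (B := B) U
  rw [hUperp, inf_eq_right.2 hker] at hdim
  exact ⟨finrank K U, hdim.symm⟩

end LinearMap.BilinForm

section TraceForm

variable {K F : Type*} [Field K] [Field F] [Algebra K F]

def quarticTwist (σ : F ≃ₐ[K] F) (α β : F) : F →ₗ[K] F where
  toFun x := σ^[2] α * σ^[4] x + σ^[2] β * σ^[3] x + σ β * σ x + α * x
  map_add' x y := by simp only [iterate_map_add, map_add]; ring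
  map_smul' c x := by simp only [Algebra.smul_def, iterate_map_mul, map_mul, AlgEquiv.commutes,
    Function.iterate_fixed (σ.commutes c), RingHom.id_apply]; ring

theorem quarticTwist_apply (σ : F ≃ₐ[K] F) (α β x : F) :
    quarticTwist σ α β x = σ^[2] α * σ^[4] x + σ^[2] β * σ^[3] x + σ β * σ x + α * x := rfl

theorem Algebra.trace_iterate_algEquiv (σ : F ≃ₐ[K] F) (j : ℕ) (x : F) :
    Algebra.trace K F (σ^[j] x) = Algebra.trace K F x := by
  rw [← AlgEquiv.coe_pow, Algebra.trace_eq_of_algEquiv]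

noncomputable def twistedTraceForm (σ : F ≃ₐ[K] F) (α β : F) : LinearMap.BilinForm K F :=
  (Algebra.traceForm K F).compl₁₂ (quarticTwist σ α β) (σ ^ 2).toLinearMap

theorem twistedTraceForm_apply (σ : F ≃ₐ[K] F) (α β x y : F) :
    twistedTraceForm σ α β x y = Algebra.trace K F (quarticTwist σ α β x * σ^[2] y) := by
  simp [twistedTraceForm]

theorem isAlt_twistedTraceForm [CharP F 2] (σ : F ≃ₐ[K] F) (α β : F) :
    (twistedTraceForm σ α β).IsAlt := by
  intro x
  set u := α * σ^[2] x * x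
  set v := β * σ x * x
  have hsplit : quarticTwist σ α β x * σ^[2] x = σ^[2] u + σ^[2] v + σ^[1] v + u := by
    simp only [u, v, quarticTwist_apply, map_mul, Function.iterate_succ_apply',
      Function.iterate_zero_apply]
    ring
  have htwice (w : F) : Algebra.trace K F w + Algebra.trace K F w = 0 := by
    rw [← map_add, CharTwo.add_self_eq_zero, map_zero]
  rw [twistedTraceForm_apply, hsplit]
  simp only [map_add, Algebra.trace_iterate_algEquiv]
  linear_combination htwice u + htwice v

theorem ker_twistedTraceForm [FiniteDimensional K F] [Algebra.IsSeparable K F]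
    (σ : F ≃ₐ[K] F) (α β : F) :
    LinearMap.ker (twistedTraceForm σ α β) = LinearMap.ker (quarticTwist σ α β) := by
  ext x
  simp only [LinearMap.mem_ker, LinearMap.ext_iff, twistedTraceForm_apply, LinearMap.zero_apply]
  refine ⟨fun h => (traceForm_nondegenerate K F).1 _ fun z => ?_, fun h y => by simp [h]⟩
  simpa using h (σ.symm (σ.symm z))

theorem even_finrank_add_finrank_ker_quarticTwist [FiniteDimensional K F]
    [Algebra.IsSeparable K F] [CharP F 2] (σ : F ≃ₐ[K] F) (α β : F) :
    Even (finrank K F + finrank K (LinearMap.ker (quarticTwist σ α β))) := by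
  rw [← ker_twistedTraceForm]
  exact (isAlt_twistedTraceForm σ α β).even_finrank_add_finrank_ker

end TraceForm

theorem AddMonoidHom.ncard_preimage_le {G H : Type*} [AddGroup G] [AddGroup H] [Finite G]
    (f : G →+ H) {T : Set H} (hT : T.Finite) :
    (f ⁻¹' T).ncard ≤ (f ⁻¹' {0}).ncard * T.ncard := by
  have hpre : f ⁻¹' T = QuotientAddGroup.mk ⁻¹' (QuotientAddGroup.kerLift f ⁻¹' T) := rfl
  rw [hpre, ← Nat.card_coe_set_eq, Nat.card_congr
    (QuotientAddGroup.preimageMkEquivAddSubgroupProdSet _ _), Nat.card_prod, Nat.card_coe_set_eq,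
    ← Nat.card_coe_set_eq (f ⁻¹' {0})]
  change Nat.card f.ker * _ ≤ Nat.card f.ker * _
  exact Nat.mul_le_mul_left _ <| Set.ncard_le_ncard_of_injOn _ (fun _ h => h)
    (QuotientAddGroup.kerLift_injective f).injOn hT

section TwistedPolynomial

variable {F : Type*} [Field F] (σ : F →+* F)

def twistedEval (c : ℕ → F) (r : ℕ) (x : F) : F := ∑ j ∈ range (r + 1), c j * σ^[j] x

variable {σ}

theorem twistedEval_succ (c : ℕ → F) (r : ℕ) (x : F) :
    twistedEval σ c (r + 1) x = twistedEval σ c r x + c (r + 1) * σ^[r + 1] x :=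
  sum_range_succ ..

theorem twistedEval_congr {c c' : ℕ → F} {r : ℕ} (h : ∀ j ≤ r, c j = c' j) (x : F) :
    twistedEval σ c r x = twistedEval σ c' r x :=
  sum_congr rfl fun j hj => by rw [h j (Nat.lt_succ_iff.1 (mem_range.1 hj))]

theorem twistedEval_zero (c : ℕ → F) (r : ℕ) : twistedEval σ c r 0 = 0 := by
  simp [twistedEval]

/-- Right division by `σ - A` in the skew polynomial ring `F[σ]`. -/
theorem exists_twistedEval_succ_eq (A : F) : ∀ (r : ℕ) (c : ℕ → F), ∃ (c' : ℕ → F) (ρ : F),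
    c' r = c (r + 1) ∧ ∀ x, twistedEval σ c (r + 1) x = twistedEval σ c' r (σ x - A * x) + ρ * x
  | 0, c => ⟨fun _ => c 1, c 0 + c 1 * A, rfl, fun x => by
      simp only [twistedEval, sum_range_succ, sum_range_zero, Function.iterate_zero_apply,
        Function.iterate_one, iterate_map_sub, iterate_map_mul]
      ring⟩
  | r + 1, c => by
    set d : ℕ → F := fun j => if j = r + 1 then c (r + 1) + c (r + 2) * σ^[r + 1] A else c j
    obtain ⟨d', ρ, -, hd'⟩ := exists_twistedEval_succ_eq A r d
    set c' : ℕ → F := fun j => if j = r + 1 then c (r + 2) else d' j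
    refine ⟨c', ρ, if_pos rfl, fun x => ?_⟩
    have hd : twistedEval σ d r x = twistedEval σ c r x :=
      twistedEval_congr (fun j hj => if_neg (by omega)) x
    have hc' : twistedEval σ c' r (σ x - A * x) = twistedEval σ d' r (σ x - A * x) :=
      twistedEval_congr (fun j hj => if_neg (by omega)) _
    specialize hd' x
    have hdtop : d (r + 1) = c (r + 1) + c (r + 2) * σ^[r + 1] A := if_pos rfl
    have hc'top : c' (r + 1) = c (r + 2) := if_pos rfl
    rw [twistedEval_succ, hd, hdtop] at hd'
    rw [twistedEval_succ, twistedEval_succ, twistedEval_succ, hc', hc'top]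
    simp only [iterate_map_sub, iterate_map_mul, ← Function.iterate_succ_apply] at hd' ⊢
    linear_combination hd'

theorem ncard_setOf_eq_mul_le [Finite F] {x₀ : F} (hx₀ : x₀ ≠ 0) :
    {x | σ x = σ x₀ / x₀ * x}.ncard ≤ {z | σ z = z}.ncard := by
  have hσx₀ : σ x₀ ≠ 0 := (map_ne_zero σ).2 hx₀
  refine Set.ncard_le_ncard_of_injOn (· / x₀) (fun x (hx : σ x = _) => ?_)
    (fun _ _ _ _ h => (div_left_inj' hx₀).1 h) (Set.toFinite _)
  change σ (x / x₀) = x / x₀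
  rw [map_div₀, hx]
  field_simp

theorem exists_ncard_setOf_twistedEval_succ_le [Finite F] {c : ℕ → F} {r : ℕ} {x₀ : F}
    (hx₀ : twistedEval σ c (r + 1) x₀ = 0) (hx₀0 : x₀ ≠ 0) :
    ∃ c' : ℕ → F, c' r = c (r + 1) ∧ {x | twistedEval σ c (r + 1) x = 0}.ncard ≤
      {z | σ z = z}.ncard * {y | twistedEval σ c' r y = 0}.ncard := by
  set A := σ x₀ / x₀
  obtain ⟨c', ρ, hc'top, hdiv⟩ := exists_twistedEval_succ_eq A r c
  have hAx₀ : σ x₀ - A * x₀ = 0 := by rw [div_mul_cancel₀ _ hx₀0, sub_self]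
  have hρ : ρ = 0 := by
    have := hdiv x₀
    rw [hx₀, hAx₀, twistedEval_zero, zero_add] at this
    exact (mul_eq_zero.1 this.symm).resolve_right hx₀0
  let ψ : F →+ F := AddMonoidHom.mk' (fun x => σ x - A * x) fun x y => by
    simp only [map_add]; ring
  have hpre : {x | twistedEval σ c (r + 1) x = 0} = ψ ⁻¹' {y | twistedEval σ c' r y = 0} := by
    ext x
    simp [ψ, hdiv, hρ]
  have hker : (ψ ⁻¹' {0}).ncard ≤ {z | σ z = z}.ncard :=
    (congrArg Set.ncard (Set.ext fun _ => sub_eq_zero)).trans_le (ncard_setOf_eq_mul_le hx₀0)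
  refine ⟨c', hc'top, ?_⟩
  rw [hpre]
  exact (ψ.ncard_preimage_le (Set.toFinite _)).trans (Nat.mul_le_mul_right _ hker)

theorem ncard_setOf_twistedEval_eq_zero_le [Finite F] : ∀ (r : ℕ) (c : ℕ → F),
    (∃ j ≤ r, c j ≠ 0) → {x | twistedEval σ c r x = 0}.ncard ≤ {z | σ z = z}.ncard ^ r
  | 0, c, ⟨j, hj, hcj⟩ => by
    obtain rfl : j = 0 := Nat.le_zero.1 hj
    refine (Set.ncard_le_ncard (t := {0}) fun x hx => ?_).trans (Set.ncard_singleton _).le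
    simpa [twistedEval, hcj] using hx
  | r + 1, c, hc => by
    set q := {z | σ z = z}.ncard
    have hq : 0 < q := (Set.ncard_pos (Set.toFinite _)).2 ⟨0, map_zero σ⟩
    by_cases htop : c (r + 1) = 0
    · have hlow : ∃ j ≤ r, c j ≠ 0 := by
        obtain ⟨j, hj, hcj⟩ := hc
        exact ⟨j, Nat.lt_succ_iff.1 (lt_of_le_of_ne hj (by rintro rfl; exact hcj htop)), hcj⟩
      have hset : {x | twistedEval σ c (r + 1) x = 0} = {x | twistedEval σ c r x = 0} := by
        simp [twistedEval_succ, htop]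
      rw [hset]
      exact (ncard_setOf_twistedEval_eq_zero_le r c hlow).trans (Nat.pow_le_pow_right hq r.le_succ)
    by_cases hS : {x | twistedEval σ c (r + 1) x = 0} ⊆ {0}
    · exact (Set.ncard_le_ncard hS).trans ((Set.ncard_singleton 0).trans_le (Nat.one_le_pow _ _ hq))
    obtain ⟨x₀, hx₀, hx₀0⟩ := Set.not_subset.1 hS
    obtain ⟨c', hc'top, hle⟩ := exists_ncard_setOf_twistedEval_succ_le hx₀ hx₀0
    calc {x | twistedEval σ c (r + 1) x = 0}.ncard
        ≤ q * {y | twistedEval σ c' r y = 0}.ncard := hle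
      _ ≤ q * q ^ r :=
          Nat.mul_le_mul_left q (ncard_setOf_twistedEval_eq_zero_le r c' ⟨r, le_rfl, hc'top ▸ htop⟩)
      _ = q ^ (r + 1) := (pow_succ' ..).symm

end TwistedPolynomial

section RootBound

variable {K F : Type*} [Field K] [Field F] [Algebra K F] [Finite F]

theorem ncard_ker_quarticTwist_le (σ : F ≃ₐ[K] F) {α β : F} (hαβ : (α, β) ≠ (0, 0)) :
    (LinearMap.ker (quarticTwist σ α β) : Set F).ncard ≤ {z | σ z = z}.ncard ^ 4 := by
  set c : ℕ → F := fun j => [α, σ β, 0, σ^[2] β, σ^[2] α].getD j 0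
  have heval (x : F) : twistedEval (σ : F →+* F) c 4 x = quarticTwist σ α β x := by
    simp only [twistedEval, c, sum_range_succ, sum_range_zero, List.getD_cons_zero,
      List.getD_cons_succ, Function.iterate_zero_apply, Function.iterate_one, RingHom.coe_coe,
      quarticTwist_apply]
    ring
  have hc : ∃ j ≤ 4, c j ≠ 0 := by
    by_cases hα : α = 0
    · exact ⟨1, by norm_num, by simpa [c, hα] using hαβ⟩
    · exact ⟨0, by norm_num, hα⟩
  have hker : (LinearMap.ker (quarticTwist σ α β) : Set F) =
      {x | twistedEval (σ : F →+* F) c 4 x = 0} := by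
    ext x
    simp [heval]
  rw [hker]
  exact ncard_setOf_twistedEval_eq_zero_le 4 c hc

theorem finrank_ker_quarticTwist_le_four (σ : F ≃ₐ[K] F)
    (hfix : ∀ z, σ z = z → z ∈ Set.range (algebraMap K F)) {α β : F} (hαβ : (α, β) ≠ (0, 0)) :
    finrank K (LinearMap.ker (quarticTwist σ α β)) ≤ 4 := by
  have : Finite K := Finite.of_injective _ (algebraMap K F).injective
  have hfixK : {z | σ z = z}.ncard ≤ Nat.card K :=
    (Set.ncard_le_ncard hfix (Set.toFinite _)).trans
      (Set.ncard_range_of_injective (algebraMap K F).injective).le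
  have hcard := (ncard_ker_quarticTwist_le σ hαβ).trans (Nat.pow_le_pow_left hfixK 4)
  rw [← Nat.card_coe_set_eq, SetLike.coe_sort_coe, Module.natCard_eq_pow_finrank (K := K)] at hcard
  exact (Nat.pow_le_pow_iff_right Finite.one_lt_card).1 hcard

end RootBound

section FixedField

open IntermediateField

variable {E L : Type*} [Field E] [Field L] [Algebra E L]

theorem IntermediateField.mem_fixedField_zpowers_iff {σ : Gal(L/E)} {x : L} :
    x ∈ fixedField (Subgroup.zpowers σ) ↔ σ x = x := by
  rw [mem_fixedField_iff]
  refine ⟨fun h => h σ (Subgroup.mem_zpowers σ), fun h τ hτ => ?_⟩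
  exact (Subgroup.zpowers_le.2 (h : σ • x = x) hτ : τ ∈ MulAction.stabilizer _ x)

theorem IntermediateField.finrank_fixedField_zpowers [FiniteDimensional E L] (σ : Gal(L/E)) :
    Module.finrank (fixedField (Subgroup.zpowers σ)) L = orderOf σ := by
  rw [finrank_fixedField_eq_card, Nat.card_zpowers]

noncomputable def AlgEquiv.overFixedField (σ : Gal(L/E)) :
    Gal(L/fixedField (Subgroup.zpowers σ)) :=
  AlgEquiv.ofRingEquiv (f := σ.toRingEquiv) fun x => mem_fixedField_zpowers_iff.1 x.2

theorem AlgEquiv.coe_overFixedField (σ : Gal(L/E)) : ⇑σ.overFixedField = ⇑σ := rfl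

end FixedField

section Frobenius

open IntermediateField

variable (p : ℕ) [Fact p.Prime] {n : ℕ} (k : ℕ)

theorem GaloisField.coe_frobenius_pow :
    ⇑(FiniteField.frobeniusAlgEquivOfAlgebraic (ZMod p) (GaloisField p n) ^ k) = (· ^ p ^ k) := by
  rw [AlgEquiv.coe_pow, FiniteField.coe_frobeniusAlgEquivOfAlgebraic_iterate, ZMod.card]

theorem GaloisField.finrank_fixedField_frobenius_pow (hn : n ≠ 0) :
    Module.finrank (fixedField (Subgroup.zpowers
      (FiniteField.frobeniusAlgEquivOfAlgebraic (ZMod p) (GaloisField p n) ^ k)))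
      (GaloisField p n) = n / n.gcd k := by
  rw [finrank_fixedField_zpowers, orderOf_pow, FiniteField.orderOf_frobeniusAlgEquivOfAlgebraic,
    GaloisField.finrank p hn]

theorem GaloisField.natCard_fixedField_frobenius_pow (hn : n ≠ 0) :
    Nat.card (fixedField (Subgroup.zpowers
      (FiniteField.frobeniusAlgEquivOfAlgebraic (ZMod p) (GaloisField p n) ^ k))) =
      p ^ n.gcd k := by
  set K := fixedField (Subgroup.zpowers
    (FiniteField.frobeniusAlgEquivOfAlgebraic (ZMod p) (GaloisField p n) ^ k))
  have hg : 0 < n.gcd k := Nat.gcd_pos_of_pos_left k (Nat.pos_of_ne_zero hn)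
  refine Nat.pow_left_injective (Nat.div_pos (Nat.gcd_le_left k (Nat.pos_of_ne_zero hn)) hg).ne' ?_
  calc Nat.card K ^ (n / n.gcd k) = Nat.card (GaloisField p n) := by
        rw [Module.natCard_eq_pow_finrank (K := K) (V := GaloisField p n),
          finrank_fixedField_frobenius_pow p k hn]
    _ = (p ^ n.gcd k) ^ (n / n.gcd k) := by
        rw [GaloisField.card p n hn, ← pow_mul, Nat.mul_div_cancel' (Nat.gcd_dvd_left n k)]

end Frobenius

theorem stmt_12_general (n k : ℕ) (d : ℕ) (hd : d = Nat.gcd n k)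
    (hodd : Odd (n / d))
    (α β : GaloisField 2 n) (hαβ : (α, β) ≠ (0, 0)) :
    {x : GaloisField 2 n |
        α ^ (2 ^ (2 * k)) * x ^ (2 ^ (4 * k)) + β ^ (2 ^ (2 * k)) * x ^ (2 ^ (3 * k))
          + β ^ (2 ^ k) * x ^ (2 ^ k) + α * x = 0}.ncard = 2 ^ d ∨
    {x : GaloisField 2 n |
        α ^ (2 ^ (2 * k)) * x ^ (2 ^ (4 * k)) + β ^ (2 ^ (2 * k)) * x ^ (2 ^ (3 * k))
          + β ^ (2 ^ k) * x ^ (2 ^ k) + α * x = 0}.ncard = 2 ^ (3 * d) := by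
  have hn : n ≠ 0 := by rintro rfl; simp at hodd
  set σ := FiniteField.frobeniusAlgEquivOfAlgebraic (ZMod 2) (GaloisField 2 n) ^ k
  set K := IntermediateField.fixedField (Subgroup.zpowers σ)
  set V := LinearMap.ker (quarticTwist σ.overFixedField α β)
  have hV : {x : GaloisField 2 n |
      α ^ (2 ^ (2 * k)) * x ^ (2 ^ (4 * k)) + β ^ (2 ^ (2 * k)) * x ^ (2 ^ (3 * k))
        + β ^ (2 ^ k) * x ^ (2 ^ k) + α * x = 0} = V := by
    ext x
    simp only [V, Set.mem_ofPred_eq, SetLike.mem_coe, LinearMap.mem_ker, quarticTwist_apply,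
      AlgEquiv.coe_overFixedField, σ, GaloisField.coe_frobenius_pow, pow_iterate, ← pow_mul]
    ring_nf
  have hK : Nat.card K = 2 ^ d := hd ▸ GaloisField.natCard_fixedField_frobenius_pow 2 k hn
  have hle : finrank K V ≤ 4 := finrank_ker_quarticTwist_le_four _
    (fun z hz => ⟨⟨z, IntermediateField.mem_fixedField_zpowers_iff.2 hz⟩, rfl⟩) hαβ
  have hpar : Even (n / d + finrank K V) := by
    rw [hd, ← GaloisField.finrank_fixedField_frobenius_pow 2 k hn]
    exact even_finrank_add_finrank_ker_quarticTwist σ.overFixedField α β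
  have hm : finrank K V = 1 ∨ finrank K V = 3 := by
    obtain ⟨a, ha⟩ := hpar
    obtain ⟨b, hb⟩ := hodd
    omega
  rw [hV, ← Nat.card_coe_set_eq, SetLike.coe_sort_coe, Module.natCard_eq_pow_finrank (K := K), hK,
    ← pow_mul]
  rcases hm with hm | hm <;> simp [hm, mul_comm]

/-- for (α,β) ≠ (0,0), with d = gcd(n,k), n/d odd and k ∉ {n/3, 2n/3},
the number of x ∈ F_{2^n} with α^{2^{2k}} x^{2^{4k}} + β^{2^{2k}} x^{2^{3k}}
+ β^{2^k} x^{2^k} + α x = 0 is either 2^d or 2^{3d}. -/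
theorem stmt_12 (n k : ℕ) (hn : 0 < n) (hk : 0 < k) (d : ℕ) (hd : d = Nat.gcd n k)
    (hodd : Odd (n / d)) (hk1 : 3 * k ≠ n) (hk2 : 3 * k ≠ 2 * n)
    (α β : GaloisField 2 n) (hαβ : (α, β) ≠ (0, 0)) :
    {x : GaloisField 2 n |
        α ^ (2 ^ (2 * k)) * x ^ (2 ^ (4 * k)) + β ^ (2 ^ (2 * k)) * x ^ (2 ^ (3 * k))
          + β ^ (2 ^ k) * x ^ (2 ^ k) + α * x = 0}.ncard = 2 ^ d ∨
    {x : GaloisField 2 n |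
        α ^ (2 ^ (2 * k)) * x ^ (2 ^ (4 * k)) + β ^ (2 ^ (2 * k)) * x ^ (2 ^ (3 * k))
          + β ^ (2 ^ k) * x ^ (2 ^ k) + α * x = 0}.ncard = 2 ^ (3 * d) :=
  stmt_12_general n k d hd hodd α β hαβ
end
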